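/- arXiv:1406.2973 — 3 statements merged into one kernel-verified Lean document; each statement's English description precedes it below -/
import Mathlib

section
/- If η and τ are square matrices with η positive semidefinite, 0 < ε < 1, and ‖η − τ‖_{2M} ≤ (ε/M)·‖η‖_{2M} in Schatten 2M-norm, then ‖η² − τ†τ‖_M ≤ (3ε/M)·‖η²‖_M in Schatten M-norm. -/
open scoped ComplexOrder

/-- The Schatten `p`-norm of a complex square matrix: the `ℓ^p` norm of its
singular values (the square roots of the eigenvalues of `Aᴴ * A`). -/
noncomputable def schattenNorm {n : ℕ} (p : ℝ) (A : Matrix (Fin n) (Fin n) ℂ) : ℝ :=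
  (∑ i, Real.sqrt ((Matrix.isHermitian_conjTranspose_mul_self A).eigenvalues i) ^ p) ^ (1 / p)

/-!
Write `η ^ 2 - τᴴ * τ = ηᴴ * (η - τ) + (η - τ)ᴴ * τ`. Tested against an orthonormal eigenbasis `v`
of this Hermitian matrix, each eigenvalue is bounded by
`‖η vᵢ‖ ‖(η - τ) vᵢ‖ + ‖(η - τ) vᵢ‖ ‖τ vᵢ‖`, so Minkowski and Hölder in `ℓ^M` reduce everything to
sums `∑ᵢ ‖A vᵢ‖ ^ (2M)`. For any orthonormal basis these are at most `‖A‖_{2M} ^ (2M)`: against an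
eigenbasis `u` of `Aᴴ * A` the weights `‖⟪uⱼ, vᵢ⟫‖²` form a doubly stochastic matrix, so Jensen
applies to `x ↦ x ^ M`. The same principle gives `‖τ‖_{2M} ≤ ‖η‖_{2M} + ‖η - τ‖_{2M}`, and
`‖η ^ 2‖_M = ‖η‖_{2M} ^ 2` because the singular values of a Hermitian matrix are the absolute values
of its eigenvalues. What is left is `a d + d (a + d) ≤ 3 (ε / M) a²` whenever `d ≤ (ε / M) a`.
-/

open Finset Matrix
open scoped InnerProductSpace

theorem ConvexOn.sum_map_mulVec_le {ι : Type*} [Fintype ι] [DecidableEq ι] {s : Set ℝ}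
    {f : ℝ → ℝ} (hf : ConvexOn ℝ s f) {W : Matrix ι ι ℝ} (hW : W ∈ doublyStochastic ℝ ι)
    {x : ι → ℝ} (hx : ∀ i, x i ∈ s) : ∑ i, f ((W *ᵥ x) i) ≤ ∑ i, f (x i) := by
  obtain ⟨hW0, hrow, hcol⟩ := mem_doublyStochastic_iff_sum.mp hW
  calc ∑ i, f ((W *ᵥ x) i) ≤ ∑ i, ∑ j, W i j * f (x j) := by
        gcongr with i
        simpa [Matrix.mulVec, dotProduct] using
          hf.map_sum_le (fun j _ => hW0 i j) (hrow i) (fun j _ => hx j)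
    _ = ∑ i, f (x i) := by
        rw [Finset.sum_comm]
        simp [← Finset.sum_mul, hcol]

theorem rpow_sum_rpow_le_rpow_sum_rpow {ι : Type*} [Fintype ι] {f g : ι → ℝ} {p : ℝ}
    (hp : 0 ≤ p) (hf : ∀ i, 0 ≤ f i) (hfg : ∀ i, f i ≤ g i) :
    (∑ i, f i ^ p) ^ (1 / p) ≤ (∑ i, g i ^ p) ^ (1 / p) :=
  Real.rpow_le_rpow (sum_nonneg fun i _ => Real.rpow_nonneg (hf i) p)
    (sum_le_sum fun i _ => Real.rpow_le_rpow (hf i) (hfg i) hp) (by positivity)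

namespace Matrix

variable {ι : Type*} [Fintype ι] [DecidableEq ι]

theorem IsHermitian.sum_eigenvalues_of_eq_cfc {A B : Matrix ι ι ℂ} (hA : A.IsHermitian)
    (hB : B.IsHermitian) {f : ℝ → ℝ} (hBA : B = cfc f A) (g : ℝ → ℝ) :
    ∑ i, g (hB.eigenvalues i) = ∑ i, g (f (hA.eigenvalues i)) := by
  subst hBA
  have hroots :
      (cfc f A).charpoly.roots = univ.val.map fun i => (f (hA.eigenvalues i) : ℂ) := by
    rw [hA.charpoly_cfc_eq, Polynomial.roots_prod _ _ (prod_ne_zero_iff.mpr fun i _ =>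
      Polynomial.X_sub_C_ne_zero _)]
    simp
  rw [hB.roots_charpoly_eq_eigenvalues] at hroots
  have hmap : univ.val.map hB.eigenvalues = univ.val.map (f ∘ hA.eigenvalues) := by
    have := congrArg (Multiset.map Complex.re) hroots
    rwa [Multiset.map_map, Multiset.map_map] at this
  have := congrArg (fun s => (s.map g).sum) hmap
  simp only [Multiset.map_map] at this
  exact this

noncomputable def singularValues (A : Matrix ι ι ℂ) : ι → ℝ :=
  fun i => √((isHermitian_conjTranspose_mul_self A).eigenvalues i)

theorem singularValues_nonneg (A : Matrix ι ι ℂ) (i : ι) : 0 ≤ A.singularValues i :=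
  Real.sqrt_nonneg _

theorem sq_singularValues (A : Matrix ι ι ℂ) (i : ι) :
    A.singularValues i ^ 2 = (isHermitian_conjTranspose_mul_self A).eigenvalues i :=
  Real.sq_sqrt (eigenvalues_conjTranspose_mul_self_nonneg A i)

theorem IsHermitian.sum_singularValues {A : Matrix ι ι ℂ} (hA : A.IsHermitian) (g : ℝ → ℝ) :
    ∑ i, g (A.singularValues i) = ∑ i, g |hA.eigenvalues i| := by
  have hsq : Aᴴ * A = cfc (· ^ 2 : ℝ → ℝ) A := by
    rw [cfc_pow_id A 2 hA.isSelfAdjoint, hA.eq, sq]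
  simp only [singularValues, ← Real.sqrt_sq_eq_abs]
  exact hA.sum_eigenvalues_of_eq_cfc (isHermitian_conjTranspose_mul_self A) hsq fun x => g √x

theorem IsHermitian.sum_singularValues_sq {A : Matrix ι ι ℂ} (hA : A.IsHermitian) (g : ℝ → ℝ) :
    ∑ i, g ((A ^ 2).singularValues i) = ∑ i, g (A.singularValues i ^ 2) := by
  have hA2 : (A ^ 2).IsHermitian := hA.pow 2
  have hsq : A ^ 2 = cfc (· ^ 2 : ℝ → ℝ) A := (cfc_pow_id A 2 hA.isSelfAdjoint).symm
  rw [hA2.sum_singularValues, hA.sum_singularValues fun x => g (x ^ 2),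
    hA.sum_eigenvalues_of_eq_cfc hA2 hsq fun x => g |x|]
  simp_rw [abs_pow]

theorem IsHermitian.toEuclideanLin_eigenvectorBasis {H : Matrix ι ι ℂ} (hH : H.IsHermitian)
    (j : ι) : H.toEuclideanLin (hH.eigenvectorBasis j)
      = (hH.eigenvalues j : ℂ) • hH.eigenvectorBasis j := by
  ext i
  simpa [toLpLin_apply] using congrFun (hH.mulVec_eigenvectorBasis j) i

theorem IsHermitian.re_inner_eigenvectorBasis {H : Matrix ι ι ℂ} (hH : H.IsHermitian) (j : ι) :
    (⟪hH.eigenvectorBasis j, H.toEuclideanLin (hH.eigenvectorBasis j)⟫_ℂ).re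
      = hH.eigenvalues j := by
  rw [hH.toEuclideanLin_eigenvectorBasis, inner_smul_right, inner_self_eq_norm_sq_to_K,
    hH.eigenvectorBasis.orthonormal.1 j]
  simp

theorem IsHermitian.re_inner_toEuclideanLin_self {H : Matrix ι ι ℂ} (hH : H.IsHermitian)
    (x : EuclideanSpace ℂ ι) :
    (⟪x, H.toEuclideanLin x⟫_ℂ).re
      = ∑ j, hH.eigenvalues j * ‖⟪hH.eigenvectorBasis j, x⟫_ℂ‖ ^ 2 := by
  have hu := hH.toEuclideanLin_eigenvectorBasis
  have hsymm := isSymmetric_toEuclideanLin_iff.mpr hH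
  rw [← hH.eigenvectorBasis.sum_inner_mul_inner, Complex.re_sum]
  refine sum_congr rfl fun j _ => ?_
  rw [← hsymm, hu, inner_smul_left, ← inner_conj_symm x, Complex.conj_ofReal,
    mul_left_comm, Complex.conj_mul', Complex.re_ofReal_mul]
  norm_cast

theorem inner_toEuclideanLin_conjTranspose_mul (A B : Matrix ι ι ℂ) (x y : EuclideanSpace ℂ ι) :
    ⟪x, (Aᴴ * B).toEuclideanLin y⟫_ℂ = ⟪A.toEuclideanLin x, B.toEuclideanLin y⟫_ℂ := by
  rw [toLpLin_mul_same, LinearMap.comp_apply, ← toEuclideanLin.eq_def,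
    toEuclideanLin_conjTranspose_eq_adjoint, LinearMap.adjoint_inner_right]

theorem norm_toEuclideanLin_sq_eq_re_inner (A : Matrix ι ι ℂ) (x : EuclideanSpace ℂ ι) :
    ‖A.toEuclideanLin x‖ ^ 2 = (⟪x, (Aᴴ * A).toEuclideanLin x⟫_ℂ).re := by
  rw [inner_toEuclideanLin_conjTranspose_mul]
  exact (inner_self_eq_norm_sq (𝕜 := ℂ) _).symm

theorem singularValues_eq_norm (A : Matrix ι ι ℂ) (i : ι) :
    A.singularValues i
      = ‖A.toEuclideanLin ((isHermitian_conjTranspose_mul_self A).eigenvectorBasis i)‖ := by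
  rw [← sq_eq_sq₀ (A.singularValues_nonneg i) (norm_nonneg _), sq_singularValues,
    norm_toEuclideanLin_sq_eq_re_inner, IsHermitian.re_inner_eigenvectorBasis]

theorem norm_toEuclideanLin_sq_eq_sum (A : Matrix ι ι ℂ) (x : EuclideanSpace ℂ ι) :
    ‖A.toEuclideanLin x‖ ^ 2 = ∑ j, A.singularValues j ^ 2
      * ‖⟪(isHermitian_conjTranspose_mul_self A).eigenvectorBasis j, x⟫_ℂ‖ ^ 2 := by
  simp_rw [sq_singularValues, norm_toEuclideanLin_sq_eq_re_inner,
    (isHermitian_conjTranspose_mul_self A).re_inner_toEuclideanLin_self]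

theorem sum_map_norm_toEuclideanLin_sq_le (A : Matrix ι ι ℂ)
    (b : OrthonormalBasis ι ℂ (EuclideanSpace ℂ ι)) {f : ℝ → ℝ} (hf : ConvexOn ℝ (Set.Ici 0) f) :
    ∑ i, f (‖A.toEuclideanLin (b i)‖ ^ 2) ≤ ∑ i, f (A.singularValues i ^ 2) := by
  set u := (isHermitian_conjTranspose_mul_self A).eigenvectorBasis
  let W : Matrix ι ι ℝ := of fun i j => ‖⟪u j, b i⟫_ℂ‖ ^ 2
  have hW : W ∈ doublyStochastic ℝ ι := mem_doublyStochastic_iff_sum.mpr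
    ⟨fun _ _ => sq_nonneg _, fun i => by simp [W, u.sum_sq_norm_inner_right],
      fun j => by simp [W, b.sum_sq_norm_inner_left]⟩
  have hWσ (i : ι) :
      (W *ᵥ fun j => A.singularValues j ^ 2) i = ‖A.toEuclideanLin (b i)‖ ^ 2 := by
    simp [W, mulVec, dotProduct, norm_toEuclideanLin_sq_eq_sum, mul_comm, u]
  simpa only [hWσ] using hf.sum_map_mulVec_le hW fun j => sq_nonneg (A.singularValues j)

theorem sum_norm_toEuclideanLin_rpow_le (A : Matrix ι ι ℂ)
    (b : OrthonormalBasis ι ℂ (EuclideanSpace ℂ ι)) {q : ℝ} (hq : 2 ≤ q) :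
    ∑ i, ‖A.toEuclideanLin (b i)‖ ^ q ≤ ∑ i, A.singularValues i ^ q := by
  have hsq {x : ℝ} (hx : 0 ≤ x) : (x ^ 2) ^ (q / 2) = x ^ q := by
    rw [← Real.rpow_natCast, ← Real.rpow_mul hx]
    ring_nf
  have hf : ConvexOn ℝ (Set.Ici 0) fun x : ℝ => x ^ (q / 2) := convexOn_rpow (by linarith)
  simpa only [hsq (norm_nonneg _), hsq (A.singularValues_nonneg _)] using
    A.sum_map_norm_toEuclideanLin_sq_le b hf

end Matrix

section Schatten

variable {n : ℕ}

theorem schattenNorm_eq_sum_singularValues (p : ℝ) (A : Matrix (Fin n) (Fin n) ℂ) :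
    schattenNorm p A = (∑ i, A.singularValues i ^ p) ^ (1 / p) :=
  rfl

theorem schattenNorm_nonneg (p : ℝ) (A : Matrix (Fin n) (Fin n) ℂ) : 0 ≤ schattenNorm p A :=
  Real.rpow_nonneg (sum_nonneg fun i _ => Real.rpow_nonneg (A.singularValues_nonneg i) p) _

theorem Matrix.IsHermitian.schattenNorm_eq {A : Matrix (Fin n) (Fin n) ℂ} (hA : A.IsHermitian)
    (p : ℝ) :
    schattenNorm p A = (∑ i, |hA.eigenvalues i| ^ p) ^ (1 / p) := by
  rw [schattenNorm_eq_sum_singularValues, hA.sum_singularValues fun x => x ^ p]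

theorem Matrix.IsHermitian.schattenNorm_sq {A : Matrix (Fin n) (Fin n) ℂ} (hA : A.IsHermitian)
    {p : ℝ} (hp : 0 < p) : schattenNorm p (A ^ 2) = schattenNorm (2 * p) A ^ 2 := by
  have hσ (i : Fin n) : (A.singularValues i ^ 2) ^ p = A.singularValues i ^ (2 * p) := by
    rw [← Real.rpow_natCast, ← Real.rpow_mul (A.singularValues_nonneg i)]
    norm_num
  rw [schattenNorm_eq_sum_singularValues, schattenNorm_eq_sum_singularValues,
    hA.sum_singularValues_sq fun x => x ^ p, ← Real.rpow_natCast, ← Real.rpow_mul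
      (sum_nonneg fun i _ => Real.rpow_nonneg (A.singularValues_nonneg i) _)]
  simp_rw [hσ]
  congr 1
  field_simp
  norm_num

theorem rpow_sum_norm_toEuclideanLin_le_schattenNorm (A : Matrix (Fin n) (Fin n) ℂ)
    (b : OrthonormalBasis (Fin n) ℂ (EuclideanSpace ℂ (Fin n))) {q : ℝ} (hq : 2 ≤ q) :
    (∑ i, ‖A.toEuclideanLin (b i)‖ ^ q) ^ (1 / q) ≤ schattenNorm q A :=
  Real.rpow_le_rpow (sum_nonneg fun i _ => Real.rpow_nonneg (norm_nonneg _) q)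
    (A.sum_norm_toEuclideanLin_rpow_le b hq) (by positivity)

theorem schattenNorm_sub_le (A B : Matrix (Fin n) (Fin n) ℂ) {q : ℝ} (hq : 2 ≤ q) :
    schattenNorm q (A - B) ≤ schattenNorm q A + schattenNorm q B := by
  set u := (isHermitian_conjTranspose_mul_self (A - B)).eigenvectorBasis
  have hσ (i : Fin n) :
      (A - B).singularValues i ≤ ‖A.toEuclideanLin (u i)‖ + ‖B.toEuclideanLin (u i)‖ := by
    rw [singularValues_eq_norm, map_sub, LinearMap.sub_apply]
    exact norm_sub_le _ _
  calc schattenNorm q (A - B)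
      ≤ (∑ i, (‖A.toEuclideanLin (u i)‖ + ‖B.toEuclideanLin (u i)‖) ^ q) ^ (1 / q) := by
        rw [schattenNorm_eq_sum_singularValues]
        exact rpow_sum_rpow_le_rpow_sum_rpow (by linarith) ((A - B).singularValues_nonneg) hσ
    _ ≤ (∑ i, ‖A.toEuclideanLin (u i)‖ ^ q) ^ (1 / q)
        + (∑ i, ‖B.toEuclideanLin (u i)‖ ^ q) ^ (1 / q) :=
        Real.Lp_add_le_of_nonneg univ (by linarith) (fun i _ => norm_nonneg _)
          fun i _ => norm_nonneg _
    _ ≤ schattenNorm q A + schattenNorm q B :=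
        add_le_add (rpow_sum_norm_toEuclideanLin_le_schattenNorm A u hq)
          (rpow_sum_norm_toEuclideanLin_le_schattenNorm B u hq)

theorem rpow_sum_norm_mul_norm_le_schattenNorm_mul (A B : Matrix (Fin n) (Fin n) ℂ)
    (b : OrthonormalBasis (Fin n) ℂ (EuclideanSpace ℂ (Fin n))) {p : ℝ} (hp : 1 ≤ p) :
    (∑ i, (‖A.toEuclideanLin (b i)‖ * ‖B.toEuclideanLin (b i)‖) ^ p) ^ (1 / p)
      ≤ schattenNorm (2 * p) A * schattenNorm (2 * p) B := by
  have hp0 : 0 < p := by linarith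
  have hholder : (2 * p).HolderTriple (2 * p) p :=
    ⟨by field_simp; ring, by positivity, by positivity⟩
  calc (∑ i, (‖A.toEuclideanLin (b i)‖ * ‖B.toEuclideanLin (b i)‖) ^ p) ^ (1 / p)
      ≤ (∑ i, ‖A.toEuclideanLin (b i)‖ ^ (2 * p)) ^ (1 / (2 * p))
        * (∑ i, ‖B.toEuclideanLin (b i)‖ ^ (2 * p)) ^ (1 / (2 * p)) := by
        have hF : 0 ≤ ∑ i, ‖A.toEuclideanLin (b i)‖ ^ (2 * p) := by positivity
        have hG : 0 ≤ ∑ i, ‖B.toEuclideanLin (b i)‖ ^ (2 * p) := by positivity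
        have hexp : p / (2 * p) * (1 / p) = 1 / (2 * p) := by field_simp
        refine (Real.rpow_le_rpow (sum_nonneg fun i _ => by positivity)
          (Real.Lr_rpow_le_Lp_mul_Lq_of_nonneg univ hholder (fun i _ => norm_nonneg _)
            fun i _ => norm_nonneg _) (by positivity)).trans_eq ?_
        rw [Real.mul_rpow (Real.rpow_nonneg hF _) (Real.rpow_nonneg hG _), ← Real.rpow_mul hF,
          ← Real.rpow_mul hG, hexp]
    _ ≤ schattenNorm (2 * p) A * schattenNorm (2 * p) B := by
        gcongr
        · exact schattenNorm_nonneg _ _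
        · exact rpow_sum_norm_toEuclideanLin_le_schattenNorm A b (by linarith)
        · exact rpow_sum_norm_toEuclideanLin_le_schattenNorm B b (by linarith)

theorem abs_re_inner_sq_sub_conjTranspose_mul_self_le {η : Matrix (Fin n) (Fin n) ℂ}
    (hη : η.IsHermitian) (τ : Matrix (Fin n) (Fin n) ℂ) (x : EuclideanSpace ℂ (Fin n)) :
    |(⟪x, (η ^ 2 - τᴴ * τ).toEuclideanLin x⟫_ℂ).re|
      ≤ ‖η.toEuclideanLin x‖ * ‖(η - τ).toEuclideanLin x‖
        + ‖(η - τ).toEuclideanLin x‖ * ‖τ.toEuclideanLin x‖ := by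
  have hsplit : η ^ 2 - τᴴ * τ = ηᴴ * (η - τ) + (η - τ)ᴴ * τ := by
    rw [conjTranspose_sub, hη.eq]
    noncomm_ring
  rw [hsplit, map_add, LinearMap.add_apply, inner_add_right,
    inner_toEuclideanLin_conjTranspose_mul, inner_toEuclideanLin_conjTranspose_mul, Complex.add_re]
  refine (abs_add_le _ _).trans (add_le_add ?_ ?_) <;>
    exact (Complex.abs_re_le_norm _).trans (norm_inner_le_norm _ _)

theorem schattenNorm_sq_sub_conjTranspose_mul_self_le {η : Matrix (Fin n) (Fin n) ℂ}
    (hη : η.IsHermitian) (τ : Matrix (Fin n) (Fin n) ℂ) {p : ℝ} (hp : 1 ≤ p) :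
    schattenNorm p (η ^ 2 - τᴴ * τ)
      ≤ schattenNorm (2 * p) η * schattenNorm (2 * p) (η - τ)
        + schattenNorm (2 * p) (η - τ) * schattenNorm (2 * p) τ := by
  have hX : (η ^ 2 - τᴴ * τ).IsHermitian := (hη.pow 2).sub (isHermitian_conjTranspose_mul_self τ)
  set v := hX.eigenvectorBasis
  have habs (i : Fin n) : |hX.eigenvalues i|
      ≤ ‖η.toEuclideanLin (v i)‖ * ‖(η - τ).toEuclideanLin (v i)‖
        + ‖(η - τ).toEuclideanLin (v i)‖ * ‖τ.toEuclideanLin (v i)‖ := by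
    rw [← hX.re_inner_eigenvectorBasis]
    exact abs_re_inner_sq_sub_conjTranspose_mul_self_le hη τ (v i)
  rw [hX.schattenNorm_eq]
  refine (rpow_sum_rpow_le_rpow_sum_rpow (by linarith) (fun i => abs_nonneg _) habs).trans ?_
  refine (Real.Lp_add_le_of_nonneg univ hp (fun i _ => by positivity)
    fun i _ => by positivity).trans ?_
  exact add_le_add (rpow_sum_norm_mul_norm_le_schattenNorm_mul η (η - τ) v hp)
    (rpow_sum_norm_mul_norm_le_schattenNorm_mul (η - τ) τ v hp)

end Schatten

theorem mul_add_mul_le_three_mul_mul_sq {a d t c : ℝ} (ha : 0 ≤ a) (hd : 0 ≤ d)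
    (hda : d ≤ c * a) (hc : c ≤ 1) (ht : t ≤ a + d) : a * d + d * t ≤ 3 * c * a ^ 2 := by
  have hca : d ≤ a := hda.trans (mul_le_of_le_one_left ha hc)
  nlinarith [mul_le_mul_of_nonneg_left hda ha, mul_le_mul_of_nonneg_left ht hd,
    mul_le_mul_of_nonneg_left hda hd, mul_nonneg (hd.trans hda) (sub_nonneg.2 hca)]

theorem schatten_sq_bound_general {n : ℕ} (η τ : Matrix (Fin n) (Fin n) ℂ)
    (hη : η.PosSemidef) (M : ℕ) (hM : 1 ≤ M) (ε : ℝ) (hε1 : ε < 1)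
    (h : schattenNorm (2 * M) (η - τ) ≤ ε / M * schattenNorm (2 * M) η) :
    schattenNorm M (η ^ 2 - τ.conjTranspose * τ) ≤ 3 * ε / M * schattenNorm M (η ^ 2) := by
  have hM' : (1 : ℝ) ≤ M := by exact_mod_cast hM
  have hc : ε / M ≤ 1 := div_le_one_of_le₀ (hε1.le.trans hM') (by positivity)
  have htri : schattenNorm (2 * M) τ ≤ schattenNorm (2 * M) η + schattenNorm (2 * M) (η - τ) := by
    simpa using schattenNorm_sub_le η (η - τ) (q := 2 * M) (by linarith)
  calc schattenNorm M (η ^ 2 - τ.conjTranspose * τ)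
      ≤ schattenNorm (2 * M) η * schattenNorm (2 * M) (η - τ)
        + schattenNorm (2 * M) (η - τ) * schattenNorm (2 * M) τ :=
        schattenNorm_sq_sub_conjTranspose_mul_self_le hη.isHermitian τ hM'
    _ ≤ 3 * (ε / M) * schattenNorm (2 * M) η ^ 2 :=
        mul_add_mul_le_three_mul_mul_sq (schattenNorm_nonneg _ _) (schattenNorm_nonneg _ _) h hc
          htri
    _ = 3 * ε / M * schattenNorm M (η ^ 2) := by
        rw [hη.isHermitian.schattenNorm_sq (by linarith)]
        ring

theorem schatten_sq_bound {n : ℕ} (η τ : Matrix (Fin n) (Fin n) ℂ)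
    (hη : η.PosSemidef) (M : ℕ) (hM : 1 ≤ M) (ε : ℝ) (hε0 : 0 < ε) (hε1 : ε < 1)
    (h : schattenNorm (2 * M) (η - τ) ≤ ε / M * schattenNorm (2 * M) η) :
    schattenNorm M (η ^ 2 - τ.conjTranspose * τ) ≤ 3 * ε / M * schattenNorm M (η ^ 2) :=
  schatten_sq_bound_general η τ hη M hM ε hε1 h
end

section
/- Trotter error for matrices: if H = ∑_{i=1}^K h_i is a sum of K Hermitian matrices each with operator norm ‖h_i‖ ≤ 1, β > 0, 0 < ε < 1, and M > 36β²K²/ε (with M also exceeding 3βK), then ‖e^{−βH/2M} − ∏_{i=1}^K e^{−βh_i/2M}‖ ≤ ε/(3M) in operator norm. -/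
open scoped Matrix.Norms.L2Operator
open NormedSpace Finset Nat

/-!
Both `exp (∑ xᵢ)` and `∏ exp xᵢ` equal `1 + ∑ xᵢ` up to a second-order remainder, and each
remainder is dominated by the scalar one, `exp s - 1 - s ≤ s²` with `s = ∑ ‖xᵢ‖ ≤ 1`. For the
product this goes by induction on the number of factors, since
`eᵃ (eᵇ - 1 - b) + (eᵃ - 1 - a) + (eᵃ - 1) b = eᵃ⁺ᵇ - 1 - (a + b)`.
For `xᵢ = -(β / 2M) hᵢ` we get `s ≤ βK / 2M ≤ 1`, and `2 s² ≤ ε / 3M` by the bound on `M`.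
-/

section BanachAlgebra

variable {A : Type*} [NormedRing A] [NormedAlgebra ℝ A] [CompleteSpace A]

theorem norm_exp_sub_sum_range_le (X : A) {m : ℕ} (hm : m ≠ 0) :
    ‖exp X - ∑ k ∈ range m, (k !⁻¹ : ℝ) • X ^ k‖ ≤
      Real.exp ‖X‖ - ∑ k ∈ range m, ‖X‖ ^ k / k ! := by
  have hs := norm_expSeries_summable' (𝕂 := ℝ) X
  have hr := Real.summable_pow_div_factorial ‖X‖
  rw [congrFun (exp_eq_tsum ℝ) X, ← hs.of_norm.sum_add_tsum_nat_add m, add_sub_cancel_left,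
    Real.exp_eq_exp_ℝ, congrFun (exp_eq_tsum_div (𝔸 := ℝ)) ‖X‖, ← hr.sum_add_tsum_nat_add m,
    add_sub_cancel_left]
  rw [← summable_nat_add_iff m] at hs hr
  refine (norm_tsum_le_tsum_norm hs).trans (hs.tsum_le_tsum (fun k => ?_) hr)
  rw [norm_smul, norm_inv, Real.norm_natCast, inv_mul_eq_div]
  exact div_le_div_of_nonneg_right (norm_pow_le' X (by omega)) (by positivity)

theorem norm_exp_sub_one_sub_le (X : A) : ‖exp X - 1 - X‖ ≤ Real.exp ‖X‖ - 1 - ‖X‖ := by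
  simpa [sum_range_succ, sub_sub] using norm_exp_sub_sum_range_le X two_ne_zero

theorem norm_exp_sub_one_le (X : A) : ‖exp X - 1‖ ≤ Real.exp ‖X‖ - 1 := by
  simpa using norm_exp_sub_sum_range_le X one_ne_zero

variable [NormOneClass A]

theorem norm_exp_le (X : A) : ‖exp X‖ ≤ Real.exp ‖X‖ := by
  calc ‖exp X‖ = ‖(exp X - 1) + 1‖ := by rw [sub_add_cancel]
    _ ≤ (Real.exp ‖X‖ - 1) + 1 :=
      (norm_add_le _ _).trans (by rw [norm_one]; linarith [norm_exp_sub_one_le X])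
    _ = Real.exp ‖X‖ := sub_add_cancel _ _

theorem norm_exp_mul_sub_one_sub_add_le (X P S : A) {b : ℝ} (hS : ‖S‖ ≤ b)
    (hP : ‖P - 1 - S‖ ≤ Real.exp b - 1 - b) :
    ‖exp X * P - 1 - (X + S)‖ ≤ Real.exp (‖X‖ + b) - 1 - (‖X‖ + b) := by
  have hsplit : exp X * P - 1 - (X + S) =
      exp X * (P - 1 - S) + (exp X - 1 - X) + (exp X - 1) * S := by
    noncomm_ring
  have h1 := (norm_mul_le (exp X) (P - 1 - S)).trans
    (mul_le_mul (norm_exp_le X) hP (norm_nonneg _) (Real.exp_nonneg _))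
  have h2 := norm_exp_sub_one_sub_le X
  have h3 := (norm_mul_le (exp X - 1) S).trans
    (mul_le_mul (norm_exp_sub_one_le X) hS (norm_nonneg _)
      (sub_nonneg.mpr (Real.one_le_exp (norm_nonneg X))))
  rw [hsplit, Real.exp_add]
  exact norm_add₃_le.trans (by linarith)

theorem norm_prod_exp_sub_one_sub_sum_le {K : ℕ} (x : Fin K → A) :
    ‖(List.ofFn fun i => exp (x i)).prod - 1 - ∑ i, x i‖ ≤
      Real.exp (∑ i, ‖x i‖) - 1 - ∑ i, ‖x i‖ := by
  induction K with
  | zero => simp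
  | succ K ih =>
    rw [List.ofFn_succ, List.prod_cons, Fin.sum_univ_succ, Fin.sum_univ_succ]
    exact norm_exp_mul_sub_one_sub_add_le _ _ _ (norm_sum_le _ _) (ih _)

theorem norm_exp_sum_sub_prod_exp_le {K : ℕ} (x : Fin K → A) (hx : ∑ i, ‖x i‖ ≤ 1) :
    ‖exp (∑ i, x i) - (List.ofFn fun i => exp (x i)).prod‖ ≤ 2 * (∑ i, ‖x i‖) ^ 2 := by
  have hS : ‖∑ i, x i‖ ≤ ∑ i, ‖x i‖ := norm_sum_le _ _
  have hsq : ∀ a : ℝ, 0 ≤ a → a ≤ 1 → Real.exp a - 1 - a ≤ a ^ 2 := fun a ha ha1 =>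
    (le_abs_self _).trans (Real.abs_exp_sub_one_sub_id_le (abs_le.mpr ⟨by linarith, ha1⟩))
  have h1 : ‖exp (∑ i, x i) - 1 - ∑ i, x i‖ ≤ (∑ i, ‖x i‖) ^ 2 :=
    (norm_exp_sub_one_sub_le _).trans <| (hsq _ (norm_nonneg _) (hS.trans hx)).trans <|
      pow_le_pow_left₀ (norm_nonneg _) hS 2
  have h2 := (norm_prod_exp_sub_one_sub_sum_le x).trans (hsq _ (hS.trans' (norm_nonneg _)) hx)
  calc ‖exp (∑ i, x i) - (List.ofFn fun i => exp (x i)).prod‖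
      = ‖(exp (∑ i, x i) - 1 - ∑ i, x i) -
          ((List.ofFn fun i => exp (x i)).prod - 1 - ∑ i, x i)‖ := by
        congr 1; abel
    _ ≤ _ := (norm_sub_le _ _).trans (by linarith)

end BanachAlgebra

theorem trotter_error_general {n K : ℕ} (h : Fin K → Matrix (Fin n) (Fin n) ℂ)
    (hnorm : ∀ i, ‖h i‖ ≤ 1)
    (β : ℝ) (hβ : 0 < β) (ε : ℝ) (hε0 : 0 < ε)
    (M : ℕ) (hM : (M : ℝ) > 36 * β ^ 2 * K ^ 2 / ε) (hM' : (M : ℝ) > 3 * β * K) :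
    ‖NormedSpace.exp ((-(β / (2 * M))) • ∑ i, h i) -
        (List.ofFn (fun i => NormedSpace.exp ((-(β / (2 * M))) • h i))).prod‖ ≤
      ε / (3 * M) := by
  have hMpos : (0 : ℝ) < M := lt_of_le_of_lt (by positivity) hM'
  -- the operator norm satisfies `‖1‖ = 1` only on a nonzero space
  rcases isEmpty_or_nonempty (Fin n) with _ | _
  · rw [Subsingleton.elim (_ - _) 0, norm_zero]
    positivity
  set c := β / (2 * M) with hc
  have hc0 : 0 < c := by positivity
  have hx : ∑ i, ‖-c • h i‖ ≤ K * c :=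
    calc ∑ i, ‖-c • h i‖ = ∑ i, c * ‖h i‖ := by simp [norm_smul, abs_of_pos hc0]
      _ ≤ ∑ _i : Fin K, c := sum_le_sum fun i _ => mul_le_of_le_one_right hc0.le (hnorm i)
      _ = K * c := by simp
  have hKc : K * c ≤ 1 := by
    rw [← mul_div_assoc, div_le_one (by positivity)]
    linarith
  have hMε : 36 * β ^ 2 * K ^ 2 < M * ε := (div_lt_iff₀ hε0).mp hM
  rw [smul_sum]
  calc _ ≤ 2 * (∑ i, ‖-c • h i‖) ^ 2 := norm_exp_sum_sub_prod_exp_le _ (hx.trans hKc)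
    _ ≤ 2 * (K * c) ^ 2 := by gcongr
    _ ≤ ε / (3 * M) := by
      rw [hc, le_div_iff₀ (by positivity)]
      field_simp
      nlinarith

/-- Trotter error in operator norm. -/
theorem trotter_error {n K : ℕ} (h : Fin K → Matrix (Fin n) (Fin n) ℂ)
    (hherm : ∀ i, (h i).IsHermitian) (hnorm : ∀ i, ‖h i‖ ≤ 1)
    (β : ℝ) (hβ : 0 < β) (ε : ℝ) (hε0 : 0 < ε) (hε1 : ε < 1)
    (M : ℕ) (hM : (M : ℝ) > 36 * β ^ 2 * K ^ 2 / ε) (hM' : (M : ℝ) > 3 * β * K) :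
    ‖NormedSpace.exp ((-(β / (2 * M))) • ∑ i, h i) -
        (List.ofFn (fun i => NormedSpace.exp ((-(β / (2 * M))) • h i))).prod‖ ≤
      ε / (3 * M) :=
  trotter_error_general h hnorm β hβ ε hε0 M hM hM'
end

section
/- Second-order Trotter term bound: let h₁,…,h_K be matrices with ‖h_i‖ ≤ 1, β > 0, M ≥ 3βK, and set x_i = e^{−βh_i/2M} − I. Then ‖∏_{i=1}^K (I + x_i) − I + (β/2M)∑_i h_i‖ ≤ 6K²β²/M². -/
open scoped Matrix.Norms.L2Operator

/-! With `t = β / 2M`, each factor satisfies `‖x i‖ ≤ eᵗ - 1` and `‖x i + t • h i‖ ≤ t²` (exponential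
series tail bounds, valid in any Banach algebra). Expanding the noncommutative product,
`‖∏ (1 + x i) - 1 - ∑ x i‖ ≤ (1 + (eᵗ - 1))ᴷ - 1 - K (eᵗ - 1) ≤ e^{Kt} - 1 - Kt ≤ (Kt)²`, so the
total error is at most `(Kt)² + K t² ≤ 2 (Kt)²`, and `6 K² β² / M² = 24 (Kt)²`. -/

namespace NormedSpace

variable {𝔸 : Type*} [NormedRing 𝔸] [NormedAlgebra ℝ 𝔸] [CompleteSpace 𝔸]

theorem norm_exp_sub_sum_range_le (x : 𝔸) {k : ℕ} (hk : k ≠ 0) :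
    ‖exp x - ∑ i ∈ Finset.range k, (i.factorial⁻¹ : ℝ) • x ^ i‖ ≤
      Real.exp ‖x‖ - ∑ i ∈ Finset.range k, ‖x‖ ^ i / i.factorial := by
  have hx := (hasSum_nat_add_iff' k).mpr (exp_series_hasSum_exp' (𝕂 := ℝ) x)
  have hr := (hasSum_nat_add_iff' k).mpr (expSeries_div_hasSum_exp ‖x‖)
  rw [← Real.exp_eq_exp_ℝ] at hr
  refine hx.norm_le_of_bounded hr fun m => ?_
  rw [norm_smul, norm_inv, Real.norm_natCast, inv_mul_eq_div]
  gcongr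
  exact norm_pow_le' x (by omega)

theorem norm_exp_sub_one_le (x : 𝔸) : ‖exp x - 1‖ ≤ Real.exp ‖x‖ - 1 := by
  simpa using norm_exp_sub_sum_range_le x one_ne_zero

theorem norm_exp_sub_one_sub_le_sq {x : 𝔸} (hx : ‖x‖ ≤ 1) : ‖exp x - 1 - x‖ ≤ ‖x‖ ^ 2 := by
  have h := norm_exp_sub_sum_range_le x two_ne_zero
  simp only [Finset.sum_range_succ, Finset.sum_range_zero] at h
  norm_num [sub_add_eq_sub_sub] at h
  refine h.trans (le_trans (le_abs_self _) (Real.abs_exp_sub_one_sub_id_le ?_))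
  rwa [abs_norm]

end NormedSpace

namespace List

variable {A : Type*} [NormedRing A] {δ : ℝ}

theorem norm_prod_map_one_add_sub_one_le (l : List A) (h : ∀ y ∈ l, ‖y‖ ≤ δ) :
    ‖(l.map (1 + ·)).prod - 1‖ ≤ (1 + δ) ^ l.length - 1 := by
  induction l with
  | nil => simp
  | cons y l ih =>
    simp only [forall_mem_cons] at h
    obtain ⟨hy, hl⟩ := h
    have hδ : 0 ≤ δ := (norm_nonneg y).trans hy
    set P := (l.map (1 + ·)).prod
    have hP := ih hl
    calc ‖(1 + y) * P - 1‖ = ‖(P - 1) + y * (P - 1) + y‖ := by noncomm_ring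
      _ ≤ ‖P - 1‖ + ‖y‖ * ‖P - 1‖ + ‖y‖ :=
        norm_add₃_le.trans (by gcongr; exact norm_mul_le _ _)
      _ ≤ ((1 + δ) ^ l.length - 1) + δ * ((1 + δ) ^ l.length - 1) + δ := by gcongr
      _ = (1 + δ) ^ (y :: l).length - 1 := by rw [length_cons, pow_succ]; ring

theorem norm_prod_map_one_add_sub_one_sub_sum_le (l : List A) (h : ∀ y ∈ l, ‖y‖ ≤ δ) :
    ‖(l.map (1 + ·)).prod - 1 - l.sum‖ ≤ (1 + δ) ^ l.length - 1 - l.length * δ := by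
  induction l with
  | nil => simp
  | cons y l ih =>
    have hP := norm_prod_map_one_add_sub_one_le l fun z hz => h z (mem_cons_of_mem y hz)
    simp only [forall_mem_cons] at h
    obtain ⟨hy, hl⟩ := h
    have hδ : 0 ≤ δ := (norm_nonneg y).trans hy
    set P := (l.map (1 + ·)).prod
    calc ‖(1 + y) * P - 1 - (y + l.sum)‖ = ‖(P - 1 - l.sum) + y * (P - 1)‖ := by noncomm_ring
      _ ≤ ‖P - 1 - l.sum‖ + ‖y‖ * ‖P - 1‖ := norm_add_le_of_le le_rfl (norm_mul_le _ _)
      _ ≤ ((1 + δ) ^ l.length - 1 - l.length * δ) + δ * ((1 + δ) ^ l.length - 1) := by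
        gcongr
        exact ih hl
      _ = (1 + δ) ^ (y :: l).length - 1 - (y :: l).length * δ := by
        rw [length_cons, pow_succ]; push_cast; ring

theorem norm_prod_map_one_add_sub_one_sub_sum_le_sq (l : List A) {t : ℝ} (ht : 0 ≤ t)
    (hlt : l.length * t ≤ 1) (h : ∀ y ∈ l, ‖y‖ ≤ Real.exp t - 1) :
    ‖(l.map (1 + ·)).prod - 1 - l.sum‖ ≤ (l.length * t) ^ 2 := by
  refine (norm_prod_map_one_add_sub_one_sub_sum_le l h).trans ?_
  have hexp : (1 + (Real.exp t - 1)) ^ l.length = Real.exp (l.length * t) := by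
    rw [add_sub_cancel, Real.exp_nat_mul]
  have hquad := Real.abs_exp_sub_one_sub_id_le (x := l.length * t)
    (by rwa [abs_of_nonneg (by positivity)])
  have hlin : l.length * t ≤ l.length * (Real.exp t - 1) := by
    gcongr; linarith [Real.add_one_le_exp t]
  rw [hexp]
  linarith [le_abs_self (Real.exp (l.length * t) - 1 - l.length * t)]

end List

/-- Second-order bound for the Trotter product expansion. -/
theorem trotter_second_order {n K : ℕ} (h : Fin K → Matrix (Fin n) (Fin n) ℂ)
    (hnorm : ∀ i, ‖h i‖ ≤ 1) (β : ℝ) (hβ : 0 < β) (M : ℕ) (hM : (M : ℝ) ≥ 3 * β * K)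
    (x : Fin K → Matrix (Fin n) (Fin n) ℂ)
    (hx : ∀ i, x i = NormedSpace.exp ((-(β / (2 * M))) • h i) - 1) :
    ‖(List.ofFn (fun i => 1 + x i)).prod - 1 + (β / (2 * M)) • ∑ i, h i‖ ≤
      6 * K ^ 2 * β ^ 2 / M ^ 2 := by
  obtain rfl | hK := Nat.eq_zero_or_pos K
  · simp
  have hK1 : (1 : ℝ) ≤ K := by exact_mod_cast hK
  have hM0 : (0 : ℝ) < M := by nlinarith
  set t := β / (2 * M) with ht_def
  have ht : 0 ≤ t := by positivity
  have hKt : K * t ≤ 1 / 6 := by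
    rw [ht_def, mul_div_assoc', div_le_iff₀ (by positivity)]; linarith
  have hsmul : ∀ i, ‖(-t) • h i‖ ≤ t := fun i => by
    rw [norm_smul, norm_neg, Real.norm_of_nonneg ht]
    exact mul_le_of_le_one_right ht (hnorm i)
  have hx1 : ∀ i, ‖x i‖ ≤ Real.exp t - 1 := fun i => by
    rw [hx i]
    exact (NormedSpace.norm_exp_sub_one_le _).trans (by gcongr; exact hsmul i)
  have hx2 : ∀ i, ‖x i + t • h i‖ ≤ t ^ 2 := fun i => by
    have ht1 : t ≤ 1 := (le_mul_of_one_le_left ht hK1).trans (by linarith)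
    rw [show x i + t • h i = NormedSpace.exp ((-t) • h i) - 1 - (-t) • h i by
      rw [hx i, neg_smul]; abel]
    exact (NormedSpace.norm_exp_sub_one_sub_le_sq ((hsmul i).trans ht1)).trans
      (pow_le_pow_left₀ (norm_nonneg _) (hsmul i) 2)
  have hprod := List.norm_prod_map_one_add_sub_one_sub_sum_le_sq (List.ofFn x) ht
    (by rw [List.length_ofFn]; linarith) (by simpa [List.mem_ofFn] using hx1)
  rw [List.map_ofFn, List.sum_ofFn, List.length_ofFn] at hprod
  have hsum : ‖∑ i, (x i + t • h i)‖ ≤ K * t ^ 2 :=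
    (norm_sum_le _ _).trans ((Finset.sum_le_sum fun i _ => hx2 i).trans_eq (by simp))
  calc _ = ‖((List.ofFn (fun i => 1 + x i)).prod - 1 - ∑ i, x i) + ∑ i, (x i + t • h i)‖ := by
        rw [Finset.sum_add_distrib, Finset.smul_sum]; abel_nf
    _ ≤ (K * t) ^ 2 + K * t ^ 2 := norm_add_le_of_le hprod hsum
    _ ≤ 24 * (K * t) ^ 2 := by nlinarith
    _ = 6 * K ^ 2 * β ^ 2 / M ^ 2 := by rw [ht_def]; ring
end
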